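/- For all A, B ∈ Mat_n(𝕋), per(AB) ≥ per(A) + per(B) (in ℝ ∪ {−∞}). Moreover, if AB is nonsingular, then A and B are nonsingular, per(AB) = per(A) + per(B), and the unique optimal permutations satisfy τ_{AB} = τ_B ∘ τ_A. -/

import Mathlib

attribute [local instance] Classical.propDecidable

/-- The tropical (max-plus) semiring carrier: `ℝ ∪ {−∞}`. -/
abbrev Trop : Type := WithBot ℝ

/-- Tropical matrix multiplication: `(A ⊙ B)_{i,j} = max_k (A_{i,k} + B_{k,j})`. -/
def tmul {n m p : ℕ} (A : Matrix (Fin n) (Fin m) Trop) (B : Matrix (Fin m) (Fin p) Trop) :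
    Matrix (Fin n) (Fin p) Trop :=
  fun i j => Finset.univ.sup (fun k => A i k + B k j)

/-- The tropical identity matrix. -/
def tId (n : ℕ) : Matrix (Fin n) (Fin n) Trop :=
  fun i j => if i = j then (0 : Trop) else ⊥

/-- Tropical matrix power. -/
def tPow {n : ℕ} (A : Matrix (Fin n) (Fin n) Trop) : ℕ → Matrix (Fin n) (Fin n) Trop
  | 0 => tId n
  | t + 1 => tmul A (tPow A t)

/-- Weight of a permutation: `ω(π) = Σ_i A_{i,π(i)}`. -/
def permWeight {n : ℕ} (A : Matrix (Fin n) (Fin n) Trop) (π : Equiv.Perm (Fin n)) : Trop :=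
  ∑ i, A i (π i)

/-- Tropical permanent: `per(A) = max_π ω(π)`. -/
def tPer {n : ℕ} (A : Matrix (Fin n) (Fin n) Trop) : Trop :=
  Finset.univ.sup (fun π : Equiv.Perm (Fin n) => permWeight A π)

/-- Nonsingular: exactly one permutation attains the permanent. -/
def Nonsingular {n : ℕ} (A : Matrix (Fin n) (Fin n) Trop) : Prop :=
  ∃! π : Equiv.Perm (Fin n), permWeight A π = tPer A

/-- Tropical rank: the largest `k` such that `A` has a nonsingular `k × k` submatrix. -/
noncomputable def tropRank {n : ℕ} (A : Matrix (Fin n) (Fin n) Trop) : ℕ :=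
  sSup {k : ℕ | ∃ (r : Fin k → Fin n) (c : Fin k → Fin n),
    Function.Injective r ∧ Function.Injective c ∧
    Nonsingular (fun i j => A (r i) (c j))}

/-- Factor rank: the smallest `k` such that `A = B ⊙ C` with `B` of size `n × k` and `C` of
size `k × n`. -/
noncomputable def facRank {n : ℕ} (A : Matrix (Fin n) (Fin n) Trop) : ℕ :=
  sInf {k : ℕ | ∃ (B : Matrix (Fin n) (Fin k) Trop) (C : Matrix (Fin k) (Fin n) Trop),
    A = tmul B C}

/-- Trace: `tr(A) = Σ_i A_{i,i}` in `ℝ ∪ {−∞}`. -/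
def tTrace {n : ℕ} (A : Matrix (Fin n) (Fin n) Trop) : Trop := ∑ i, A i i

/-- Evaluation of a word over the alphabet `{a, b}` (with `a = true`, `b = false`) at the
pair of tropical matrices `(A, B)`, i.e. `a ↦ A`, `b ↦ B`.  (On the empty word it returns
the identity matrix; we only use it on nonempty words.) -/
def mEval {n : ℕ} (A B : Matrix (Fin n) (Fin n) Trop) : List Bool → Matrix (Fin n) (Fin n) Trop
  | [] => tId n
  | x :: w => tmul (if x then A else B) (mEval A B w)

/-- `lcm(1, 2, …, n)`. -/
def nbar (n : ℕ) : ℕ := (Finset.Icc 1 n).lcm id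

/-- A walk on the digraph `G(A)`, given by its list of visited nodes: consecutive nodes must
be joined by an arc, i.e. have weight `≠ −∞`. -/
def IsWalk {n : ℕ} (A : Matrix (Fin n) (Fin n) Trop) (p : List (Fin n)) : Prop :=
  p.Chain' (fun i j => A i j ≠ ⊥)

/-- The weight of a walk: sum of the weights of its arcs. -/
def walkWeight {n : ℕ} (A : Matrix (Fin n) (Fin n) Trop) (p : List (Fin n)) : Trop :=
  ((p.zip p.tail).map (fun q => A q.1 q.2)).sum

/-- The set of nodes on the cycle of the permutation `τ` containing `i`. -/
noncomputable def cycFinset {n : ℕ} (τ : Equiv.Perm (Fin n)) (i : Fin n) : Finset (Fin n) :=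
  Finset.univ.filter (fun j => τ.SameCycle i j)

/-- `μ_i`: the average weight of the unique cycle of `τ` containing `i`. -/
noncomputable def mu {n : ℕ} (A : Matrix (Fin n) (Fin n) Trop) (τ : Equiv.Perm (Fin n))
    (i : Fin n) : ℝ :=
  (∑ j ∈ cycFinset τ i, WithBot.unbotD 0 (A j (τ j))) / (cycFinset τ i).card

/-- Upper triangular tropical matrix: all entries below the diagonal are `−∞`. -/
def UpperTri {n : ℕ} (A : Matrix (Fin n) (Fin n) Trop) : Prop :=
  ∀ i j : Fin n, j < i → A i j = ⊥

/-- Word substitution: replace each letter `a` (`= true`) of `w` by `w₁` and each letter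
`b` (`= false`) by `w₂`. -/
def subst (w w₁ w₂ : List Bool) : List Bool :=
  w.flatMap (fun x => if x then w₁ else w₂)

/-- `k`-fold concatenation `w^k` of a word. -/
def wpow (w : List Bool) : ℕ → List Bool
  | 0 => []
  | t + 1 => w ++ wpow w t

/-- Evaluation of a word over an alphabet `α` in a semigroup `S` under the assignment
`f : α → S`; returns `none` on the empty word. -/
def aEval {S : Type*} [Mul S] {α : Type*} (f : α → S) : List α → Option S
  | [] => none
  | x :: w => some (w.foldl (fun acc y => acc * f y) (f x))

/-! Each entry of `A ⊙ B` is attained at some middle index, so the weight of a permutation `π`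
of `A ⊙ B` is a sum `∑ i, A i (f i) + B (f i) (π i)` for a choice function `f`. Conversely,
any `f` gives such a sum bounded by the weight of `π`; for `f = σ` this yields
`ω_A(σ) + ω_B(ρ) ≤ ω_{AB}(ρ σ)` and hence the inequality of permanents. If `π` is the unique
optimal permutation of `A ⊙ B`, its choice function is injective: were `f i = f j`, the same sum
would bound the weight of `π ∘ (i j)`. So `f` is a permutation `σ` and
`per(AB) = ω_A(σ) + ω_B(π σ⁻¹)`, and any other optimal permutation of `A` or of `B` would give
another optimal permutation of `A ⊙ B`. -/

section PermWeight

variable {n : ℕ} (A B : Matrix (Fin n) (Fin n) Trop)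

lemma permWeight_le_tPer (π : Equiv.Perm (Fin n)) : permWeight A π ≤ tPer A :=
  Finset.le_sup (Finset.mem_univ π)

lemma exists_permWeight_eq_tPer : ∃ π : Equiv.Perm (Fin n), permWeight A π = tPer A := by
  obtain ⟨π, -, h⟩ := Finset.exists_mem_eq_sup Finset.univ Finset.univ_nonempty (permWeight A)
  exact ⟨π, h.symm⟩

lemma sum_le_permWeight_tmul (f : Fin n → Fin n) (π : Equiv.Perm (Fin n)) :
    ∑ i, (A i (f i) + B (f i) (π i)) ≤ permWeight (tmul A B) π :=
  Finset.sum_le_sum fun i _ =>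
    Finset.le_sup (f := fun k => A i k + B k (π i)) (Finset.mem_univ (f i))

lemma exists_permWeight_tmul_eq_sum (π : Equiv.Perm (Fin n)) :
    ∃ f : Fin n → Fin n, permWeight (tmul A B) π = ∑ i, (A i (f i) + B (f i) (π i)) := by
  have hattained (i : Fin n) : ∃ k, tmul A B i (π i) = A i k + B k (π i) := by
    obtain ⟨k, -, hk⟩ :=
      Finset.exists_mem_eq_sup Finset.univ ⟨i, Finset.mem_univ i⟩ fun k => A i k + B k (π i)
    exact ⟨k, hk⟩
  choose f hf using hattained
  exact ⟨f, Finset.sum_congr rfl fun i _ => hf i⟩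

lemma permWeight_add_permWeight_eq_sum (σ ρ : Equiv.Perm (Fin n)) :
    permWeight A σ + permWeight B ρ = ∑ i, (A i (σ i) + B (σ i) ((ρ * σ) i)) := by
  rw [Finset.sum_add_distrib, permWeight, permWeight, ← Equiv.sum_comp σ (fun j => B j (ρ j))]
  rfl

lemma permWeight_add_permWeight_le_tmul (σ ρ : Equiv.Perm (Fin n)) :
    permWeight A σ + permWeight B ρ ≤ permWeight (tmul A B) (ρ * σ) :=
  permWeight_add_permWeight_eq_sum A B σ ρ ▸ sum_le_permWeight_tmul A B σ (ρ * σ)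

lemma tPer_add_tPer_le_tPer_tmul : tPer A + tPer B ≤ tPer (tmul A B) := by
  obtain ⟨σ, hσ⟩ := exists_permWeight_eq_tPer A
  obtain ⟨ρ, hρ⟩ := exists_permWeight_eq_tPer B
  calc tPer A + tPer B = permWeight A σ + permWeight B ρ := by rw [hσ, hρ]
    _ ≤ permWeight (tmul A B) (ρ * σ) := permWeight_add_permWeight_le_tmul A B σ ρ
    _ ≤ tPer (tmul A B) := permWeight_le_tPer _ _

lemma sum_mul_swap_eq_sum {f : Fin n → Fin n} {i j : Fin n} (hij : f i = f j)
    (π : Equiv.Perm (Fin n)) :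
    ∑ k, (A k (f k) + B (f k) ((π * Equiv.swap i j) k)) = ∑ k, (A k (f k) + B (f k) (π k)) := by
  have hf (k : Fin n) : f (Equiv.swap i j k) = f k := by
    rcases eq_or_ne k i with rfl | hki
    · rw [Equiv.swap_apply_left, hij]
    rcases eq_or_ne k j with rfl | hkj
    · rw [Equiv.swap_apply_right, hij]
    · rw [Equiv.swap_apply_of_ne_of_ne hki hkj]
  simp only [Finset.sum_add_distrib, Equiv.Perm.mul_apply]
  congr 1
  rw [← Equiv.sum_comp (Equiv.swap i j)]
  simp only [hf, Equiv.swap_apply_self]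

variable {A B} {π : Equiv.Perm (Fin n)}
  (hπ : ∀ π', permWeight (tmul A B) π' = tPer (tmul A B) → π' = π)
include hπ

lemma injective_of_permWeight_tmul_eq_sum (hπmax : permWeight (tmul A B) π = tPer (tmul A B))
    {f : Fin n → Fin n} (hf : permWeight (tmul A B) π = ∑ i, (A i (f i) + B (f i) (π i))) :
    Function.Injective f := by
  intro i j hij
  by_contra hne
  have hswap : permWeight (tmul A B) (π * Equiv.swap i j) = tPer (tmul A B) := by
    refine le_antisymm (permWeight_le_tPer _ _) ?_
    calc tPer (tmul A B) = ∑ k, (A k (f k) + B (f k) (π k)) := hπmax.symm.trans hf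
      _ = ∑ k, (A k (f k) + B (f k) ((π * Equiv.swap i j) k)) :=
        (sum_mul_swap_eq_sum A B hij π).symm
      _ ≤ permWeight (tmul A B) (π * Equiv.swap i j) := sum_le_permWeight_tmul A B f _
  exact hne (Equiv.swap_eq_one_iff.mp (mul_eq_left.mp (hπ _ hswap)))

lemma exists_permWeight_tmul_eq_add (hπmax : permWeight (tmul A B) π = tPer (tmul A B)) :
    ∃ σ, permWeight (tmul A B) π = permWeight A σ + permWeight B (π * σ⁻¹) := by
  obtain ⟨f, hf⟩ := exists_permWeight_tmul_eq_sum A B π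
  have hbij := Finite.injective_iff_bijective.mp (injective_of_permWeight_tmul_eq_sum hπ hπmax hf)
  refine ⟨Equiv.ofBijective f hbij, ?_⟩
  rw [permWeight_add_permWeight_eq_sum, inv_mul_cancel_right]
  exact hf

lemma mul_eq_of_tPer_tmul_le {σ ρ : Equiv.Perm (Fin n)}
    (h : tPer (tmul A B) ≤ permWeight A σ + permWeight B ρ) : ρ * σ = π :=
  hπ _ <| le_antisymm (permWeight_le_tPer _ _) <|
    h.trans (permWeight_add_permWeight_le_tmul A B σ ρ)

end PermWeight

/-- permanents of products.  `per(AB) ≥ per(A) + per(B)`, and if `AB` is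
nonsingular, then so are `A` and `B`, with `per(AB) = per(A) + per(B)` and
`τ_{AB} = τ_B ∘ τ_A`. -/
theorem per_tmul {n : ℕ} (A B : Matrix (Fin n) (Fin n) Trop) :
    tPer A + tPer B ≤ tPer (tmul A B) ∧
    (Nonsingular (tmul A B) →
      Nonsingular A ∧ Nonsingular B ∧
      tPer (tmul A B) = tPer A + tPer B ∧
      ∀ πA πB π : Equiv.Perm (Fin n),
        permWeight A πA = tPer A →
        permWeight B πB = tPer B →
        permWeight (tmul A B) π = tPer (tmul A B) →
        π = πB * πA) := by
  refine ⟨tPer_add_tPer_le_tPer_tmul A B, fun ⟨π, hπmax, hπ⟩ => ?_⟩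
  obtain ⟨σ, hσ⟩ := exists_permWeight_tmul_eq_add hπ hπmax
  set ρ := π * σ⁻¹
  have hper : tPer (tmul A B) = permWeight A σ + permWeight B ρ := hπmax.symm.trans hσ
  have hρσ : ρ * σ = π := inv_mul_cancel_right π σ
  have uniqA (σ' : Equiv.Perm (Fin n)) (h : permWeight A σ' = tPer A) : σ' = σ := by
    refine mul_left_cancel ((mul_eq_of_tPer_tmul_le hπ ?_).trans hρσ.symm)
    rw [hper, h]
    exact add_le_add_left (permWeight_le_tPer A σ) _
  have uniqB (ρ' : Equiv.Perm (Fin n)) (h : permWeight B ρ' = tPer B) : ρ' = ρ := by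
    refine mul_right_cancel ((mul_eq_of_tPer_tmul_le hπ ?_).trans hρσ.symm)
    rw [hper, h]
    exact add_le_add_right (permWeight_le_tPer B ρ) _
  obtain ⟨σA, hσA⟩ := exists_permWeight_eq_tPer A
  obtain ⟨ρB, hρB⟩ := exists_permWeight_eq_tPer B
  -- Cancelling in `hper` would fail when the permanents are `⊥`; uniqueness gives optimality.
  have hσmax : permWeight A σ = tPer A := uniqA σA hσA ▸ hσA
  have hρmax : permWeight B ρ = tPer B := uniqB ρB hρB ▸ hρB
  refine ⟨⟨σ, hσmax, uniqA⟩, ⟨ρ, hρmax, uniqB⟩, by rw [hper, hσmax, hρmax], ?_⟩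
  intro πA πB π' hA hB hπ'
  rw [hπ π' hπ', uniqA πA hA, uniqB πB hB, hρσ]
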